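/- arXiv:1502.01115 — 3 statements merged into one kernel-verified Lean document; each statement's English description precedes it below -/
import Mathlib

section
/- Fix an integer P ≥ 1, distinct points p₁,…,p_P ∈ ℝ, a target τ ∈ {p₁,…,p_P}, constants σ_k² > 0 and s > 0. For bandwidth b > 0 let K(b) be the P×P matrix with entries K(b)_{ij} = σ_k²·exp(−(p_i−p_j)²/(2b²)), let k_*(b) ∈ ℝ^P have entries k_*(b)_i = σ_k²·exp(−(p_i−τ)²/(2b²)), and let W(b) = k_*(b)ᵀ(K(b) + s·I)⁻¹ (the matrix K(b) + s·I is positive definite, hence invertible, for every b > 0). Then as b → ∞, every coordinate of the weight vector converges: W(b)_i → σ_k²/(P·σ_k² + s) for each i = 1,…,P; in particular all P weights become equal in the limit. -/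
/-!
Writing `exp (-(x - y)² / 2b²) = exp (-x² / 2b²) · exp ((x / b) (y / b)) · exp (-y² / 2b²)` exhibits
the Gaussian kernel matrix as a diagonal congruence of `[exp (aᵢ aₖ)]`, whose quadratic form
expands into the series `∑ₘ (∑ᵢ xᵢ aᵢᵐ)² / m!` of squares; hence `K(b) + s·I` is positive
definite. As `b → ∞`, `K(b) → σ²·𝟙𝟙ᵀ` and `k_*(b) → σ²·𝟙`, and inversion is continuous at the
positive definite limit `M = σ²·𝟙𝟙ᵀ + s·I`. Since `𝟙ᵀ M = (Pσ² + s) 𝟙ᵀ`, also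
`𝟙ᵀ M⁻¹ = (Pσ² + s)⁻¹ 𝟙ᵀ`, so every weight tends to `σ² / (Pσ² + s)`.
-/

open Filter Matrix Topology
open scoped Nat

theorem tendsto_exp_neg_sq_div_two_mul_sq_atTop (d : ℝ) :
    Tendsto (fun b : ℝ => Real.exp (-d ^ 2 / (2 * b ^ 2))) atTop (𝓝 1) := by
  have hexponent : Tendsto (fun b : ℝ => -d ^ 2 / (2 * b ^ 2)) atTop (𝓝 0) :=
    tendsto_const_nhds.div_atTop ((tendsto_pow_atTop two_ne_zero).const_mul_atTop two_pos)
  exact Real.tendsto_exp_nhds_zero_nhds_one.comp hexponent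

namespace Matrix

variable {ι : Type*}

noncomputable def gaussianKernel (p : ι → ℝ) (b : ℝ) : Matrix ι ι ℝ :=
  of fun i k => Real.exp (-(p i - p k) ^ 2 / (2 * b ^ 2))

theorem tendsto_gaussianKernel_atTop (p : ι → ℝ) :
    Tendsto (gaussianKernel p) atTop (𝓝 (vecMulVec 1 1)) := by
  refine tendsto_pi_nhds.2 fun i => tendsto_pi_nhds.2 fun k => ?_
  simpa [gaussianKernel] using tendsto_exp_neg_sq_div_two_mul_sq_atTop (p i - p k)

theorem posDef_smul_add_smul_one [DecidableEq ι] {A : Matrix ι ι ℝ} (hA : A.PosSemidef)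
    {c s : ℝ} (hc : 0 ≤ c) (hs : 0 < s) : (c • A + s • 1).PosDef :=
  PosDef.posSemidef_add (hA.smul hc) (PosDef.one.smul hs)

variable [Fintype ι]

theorem posSemidef_exp_mul (a : ι → ℝ) : (of fun i k => Real.exp (a i * a k)).PosSemidef := by
  refine posSemidef_iff_dotProduct_mulVec.mpr ⟨?_, fun x => ?_⟩
  · ext i k
    simp [mul_comm]
  · have hentry (i k : ι) : HasSum (fun m : ℕ => x i * a i ^ m * (x k * a k ^ m) / m !)
        (x i * (Real.exp (a i * a k) * x k)) := by
      have hexp : HasSum (fun m : ℕ => (a i * a k) ^ m / m !) (Real.exp (a i * a k)) := by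
        rw [Real.exp_eq_exp_ℝ]
        exact NormedSpace.expSeries_div_hasSum_exp _
      have hscaled : HasSum (fun m : ℕ => x i * x k * ((a i * a k) ^ m / m !))
          (x i * x k * Real.exp (a i * a k)) := hexp.mul_left _
      convert hscaled using 1
      · ext m
        ring
      · ring
    have hform : HasSum (fun m : ℕ => (∑ i, x i * a i ^ m) ^ 2 / m !)
        (star x ⬝ᵥ (of (fun i k => Real.exp (a i * a k)) *ᵥ x)) := by
      simp only [sq, Finset.sum_mul_sum]
      simp only [Finset.sum_div, dotProduct, mulVec, Finset.mul_sum, star_trivial, of_apply]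
      exact hasSum_sum fun i _ => hasSum_sum fun k _ => hentry i k
    exact hform.nonneg fun m => by positivity

theorem posSemidef_gaussianKernel (p : ι → ℝ) (b : ℝ) : (gaussianKernel p b).PosSemidef := by
  classical
  set d : ι → ℝ := fun i => Real.exp (-p i ^ 2 / (2 * b ^ 2))
  have hfactor : gaussianKernel p b =
      diagonal d * of (fun i k => Real.exp (p i / b * (p k / b))) * (diagonal d)ᴴ := by
    ext i k
    simp only [gaussianKernel, diagonal_conjTranspose, star_trivial, diagonal_mul, mul_diagonal,
      of_apply, d, ← Real.exp_add]
    congr 1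
    ring
  rw [hfactor]
  exact (posSemidef_exp_mul _).mul_mul_conjTranspose_same _

theorem vecMul_inv_eq_inv_smul_of_vecMul_eq_smul {K : Type*} [Field K] [DecidableEq ι]
    {M : Matrix ι ι K} (hM : IsUnit M.det) {v : ι → K} {r : K} (h : v ᵥ* M = r • v) :
    v ᵥ* M⁻¹ = r⁻¹ • v := by
  have hv : v = r • v ᵥ* M⁻¹ := by
    rw [← smul_vecMul, ← h, vecMul_vecMul, mul_nonsing_inv _ hM, vecMul_one]
  rcases eq_or_ne r 0 with rfl | hr
  · rw [zero_smul] at hv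
    rw [hv, zero_vecMul, smul_zero]
  · rw [hv, smul_smul, inv_mul_cancel₀ hr, one_smul, ← hv]

theorem one_vecMul_smul_vecMulVec_one_add_smul_one [DecidableEq ι] (c s : ℝ) :
    1 ᵥ* (c • vecMulVec 1 1 + s • 1 : Matrix ι ι ℝ) = (Fintype.card ι * c + s) • 1 := by
  ext i
  simp only [vecMul_add, vecMul_smul, vecMul_vecMulVec, vecMul_one]
  simp [mul_comm]

end Matrix

theorem gp_weights_equal_in_large_bandwidth_limit_general
    (P : ℕ) (p : Fin P → ℝ)
    (τ : ℝ)
    (σk2 s : ℝ) (hσ : 0 < σk2) (hs : 0 < s)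
    (K : ℝ → Matrix (Fin P) (Fin P) ℝ)
    (hK : ∀ b, K b = Matrix.of fun i k =>
      σk2 * Real.exp (-(p i - p k) ^ 2 / (2 * b ^ 2)))
    (kstar : ℝ → Fin P → ℝ)
    (hkstar : ∀ b, kstar b = fun i => σk2 * Real.exp (-(p i - τ) ^ 2 / (2 * b ^ 2)))
    (W : ℝ → Fin P → ℝ)
    (hW : ∀ b, W b = Matrix.vecMul (kstar b) (K b + s • (1 : Matrix (Fin P) (Fin P) ℝ))⁻¹) :
    (∀ b > (0 : ℝ), (K b + s • (1 : Matrix (Fin P) (Fin P) ℝ)).PosDef) ∧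
    (∀ i : Fin P,
      Tendsto (fun b : ℝ => W b i) atTop (nhds (σk2 / (P * σk2 + s)))) := by
  have hK_eq : K = fun b => σk2 • gaussianKernel p b := funext fun b => by
    rw [hK]
    rfl
  refine ⟨fun b _ => hK_eq ▸ posDef_smul_add_smul_one (posSemidef_gaussianKernel p b) hσ.le hs,
    fun i => ?_⟩
  set M : Matrix (Fin P) (Fin P) ℝ := σk2 • vecMulVec 1 1 + s • 1
  have hM : IsUnit M.det :=
    (posDef_smul_add_smul_one (posSemidef_vecMulVec_self_star 1) hσ.le hs).det_pos.ne'.isUnit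
  have hA : Tendsto (fun b => K b + s • 1) atTop (𝓝 M) := by
    rw [hK_eq]
    exact ((tendsto_gaussianKernel_atTop p).const_smul σk2).add_const _
  have hk : Tendsto kstar atTop (𝓝 (σk2 • 1)) := by
    refine tendsto_pi_nhds.2 fun k => ?_
    simpa [hkstar] using (tendsto_exp_neg_sq_div_two_mul_sq_atTop (p k - τ)).const_mul σk2
  have hinv : ContinuousAt Inv.inv M := continuousAt_matrix_inv M <| by
    rw [Ring.inverse_eq_inv']
    exact continuousAt_inv₀ (isUnit_iff_ne_zero.mp hM)
  have hW_lim : Tendsto W atTop (𝓝 ((σk2 • 1) ᵥ* M⁻¹)) := by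
    rw [funext hW]
    exact ((continuous_fst.matrix_vecMul continuous_snd).tendsto _).comp
      (hk.prodMk_nhds (hinv.tendsto.comp hA))
  have hlim : (σk2 • 1) ᵥ* M⁻¹ = (σk2 / (P * σk2 + s)) • (1 : Fin P → ℝ) := by
    rw [smul_vecMul, vecMul_inv_eq_inv_smul_of_vecMul_eq_smul hM
      (one_vecMul_smul_vecMulVec_one_add_smul_one σk2 s), smul_smul, Fintype.card_fin,
      div_eq_mul_inv]
  simpa [hlim] using tendsto_pi_nhds.1 hW_lim i

/-- As the bandwidth `b → ∞`, the Gaussian-process weights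
`W(b) = k_*(b)ᵀ (K(b) + s·I)⁻¹` all converge to `σ_k² / (P·σ_k² + s)`. -/
theorem gp_weights_equal_in_large_bandwidth_limit
    (P : ℕ) (hP : 1 ≤ P) (p : Fin P → ℝ) (hp : Function.Injective p)
    (j : Fin P) (τ : ℝ) (hτ : τ = p j)
    (σk2 s : ℝ) (hσ : 0 < σk2) (hs : 0 < s)
    (K : ℝ → Matrix (Fin P) (Fin P) ℝ)
    (hK : ∀ b, K b = Matrix.of fun i k =>
      σk2 * Real.exp (-(p i - p k) ^ 2 / (2 * b ^ 2)))
    (kstar : ℝ → Fin P → ℝ)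
    (hkstar : ∀ b, kstar b = fun i => σk2 * Real.exp (-(p i - τ) ^ 2 / (2 * b ^ 2)))
    (W : ℝ → Fin P → ℝ)
    (hW : ∀ b, W b = Matrix.vecMul (kstar b) (K b + s • (1 : Matrix (Fin P) (Fin P) ℝ))⁻¹) :
    (∀ b > (0 : ℝ), (K b + s • (1 : Matrix (Fin P) (Fin P) ℝ)).PosDef) ∧
    (∀ i : Fin P,
      Tendsto (fun b : ℝ => W b i) atTop (nhds (σk2 / (P * σk2 + s)))) :=
  gp_weights_equal_in_large_bandwidth_limit_general P p τ σk2 s hσ hs K hK kstar hkstar W hW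
end

section
/- Let P, T be positive integers, let K′ be a symmetric positive semidefinite P×P real matrix, let s : Fin P → ℝ with s_p > 0, and let k_* ∈ ℝ^P. Define the (P·T)×(P·T) matrix K indexed by pairs (p,t) ∈ Fin P × Fin T by K_{(p,t),(p′,t′)} = K′_{p,p′}, the diagonal matrix D with diagonal entries D_{(p,t)} = s_p, and the vector k̃_* ∈ ℝ^{P·T} with entries (k̃_*)_{(p,t)} = (k_*)_p. Then K + D and K′ + diag(s_p/T) are positive definite (hence invertible), and for every q : Fin P × Fin T → ℝ, writing q̄_p = (1/T)·Σ_{t=1}^{T} q_{p,t}, one has the identity k̃_*ᵀ (K + D)⁻¹ q = k_*ᵀ (K′ + diag(s_p/T))⁻¹ q̄. -/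
/-!
Replicating every model `T` times turns the kernel matrix into the pull-back `K'(p, p')` of `K'`
along `(p, t) ↦ p`. Hence, if `c` solves `(K' + diag(s / T)) c = k_*`, the replicated vector
`(p, t) ↦ c p / T` solves `(K + D) v = k̃_*`: the `T` equal copies recombine to `K' c`, and the
diagonal term `s p · c p / T` matches. Both matrices are symmetric, so
`k̃_*ᵀ (K + D)⁻¹ q = vᵀ q = cᵀ q̄ = k_*ᵀ (K' + diag(s / T))⁻¹ q̄`.
-/

open Matrix

namespace Matrix

variable {ι τ α : Type*} [Fintype ι] [Fintype τ]

lemma IsSymm.dotProduct_inv_mulVec [DecidableEq ι] [CommRing α] {M : Matrix ι ι α}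
    (hM : M.IsSymm) (k q : ι → α) : k ⬝ᵥ M⁻¹ *ᵥ q = (M⁻¹ *ᵥ k) ⬝ᵥ q := by
  rw [dotProduct_mulVec, ← mulVec_transpose, hM.inv.eq]

lemma submatrix_fst_mulVec [NonUnitalNonAssocSemiring α] (A : Matrix ι ι α) (v : ι × τ → α) :
    A.submatrix Prod.fst Prod.fst *ᵥ v = fun i : ι × τ => (A *ᵥ fun p => ∑ t, v (p, t)) i.1 := by
  funext i
  simp only [mulVec, dotProduct, submatrix_apply, Fintype.sum_prod_type, Finset.mul_sum]

lemma submatrix_fst_add_diagonal_mulVec [DecidableEq ι] [DecidableEq τ] [Field α]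
    (A : Matrix ι ι α) (s c : ι → α) (hτ : (Fintype.card τ : α) ≠ 0) :
    (A.submatrix Prod.fst Prod.fst + diagonal fun i : ι × τ => s i.1) *ᵥ
        (fun i => c i.1 / Fintype.card τ) =
      fun i : ι × τ => ((A + diagonal fun p => s p / Fintype.card τ) *ᵥ c) i.1 := by
  have hsum : ∀ p, ∑ _t : τ, c p / Fintype.card τ = c p := fun p => by
    rw [Finset.sum_const, Finset.card_univ, nsmul_eq_mul, mul_div_cancel₀ _ hτ]
  rw [add_mulVec, submatrix_fst_mulVec]
  funext i
  simp only [hsum, mulVec_diagonal, Pi.add_apply, add_mulVec]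
  ring

lemma dotProduct_fst_div_card [Field α] (c : ι → α) (q : ι × τ → α) :
    (fun i => c i.1 / Fintype.card τ) ⬝ᵥ q =
      c ⬝ᵥ fun p => 1 / (Fintype.card τ : α) * ∑ t, q (p, t) := by
  simp only [dotProduct, Fintype.sum_prod_type, Finset.mul_sum]
  refine Finset.sum_congr rfl fun p _ => Finset.sum_congr rfl fun t _ => ?_
  ring

end Matrix

theorem gp_posterior_mean_equivalence_general
    (P T : ℕ) (hT : 0 < T)
    (K' : Matrix (Fin P) (Fin P) ℝ) (hK' : K'.PosSemidef)
    (s : Fin P → ℝ) (hs : ∀ p, 0 < s p)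
    (kstar : Fin P → ℝ)
    (K : Matrix (Fin P × Fin T) (Fin P × Fin T) ℝ)
    (hK : ∀ pt pt' : Fin P × Fin T, K pt pt' = K' pt.1 pt'.1)
    (D : Matrix (Fin P × Fin T) (Fin P × Fin T) ℝ)
    (hD : D = Matrix.diagonal fun pt : Fin P × Fin T => s pt.1)
    (ktilde : Fin P × Fin T → ℝ)
    (hktilde : ∀ pt : Fin P × Fin T, ktilde pt = kstar pt.1) :
    (K + D).PosDef ∧
    (K' + Matrix.diagonal fun p : Fin P => s p / (T : ℝ)).PosDef ∧
    ∀ q : Fin P × Fin T → ℝ,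
      ktilde ⬝ᵥ ((K + D)⁻¹).mulVec q =
        kstar ⬝ᵥ ((K' + Matrix.diagonal fun p : Fin P => s p / (T : ℝ))⁻¹).mulVec
          (fun p : Fin P => (1 / (T : ℝ)) * ∑ t : Fin T, q (p, t)) := by
  obtain rfl : K = K'.submatrix Prod.fst Prod.fst := Matrix.ext hK
  obtain rfl : ktilde = fun i => kstar i.1 := funext hktilde
  subst hD
  have hApd : (K' + diagonal fun p => s p / (T : ℝ)).PosDef :=
    PosDef.posSemidef_add hK' (.diagonal fun p => div_pos (hs p) (Nat.cast_pos.mpr hT))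
  have hMpd : (K'.submatrix Prod.fst Prod.fst + diagonal fun i : Fin P × Fin T => s i.1).PosDef :=
    PosDef.posSemidef_add (hK'.submatrix _) (.diagonal fun i => hs i.1)
  refine ⟨hMpd, hApd, fun q => ?_⟩
  have hsolve := submatrix_fst_add_diagonal_mulVec (τ := Fin T) K' s
    ((K' + diagonal fun p => s p / (T : ℝ))⁻¹ *ᵥ kstar) (by simp [hT.ne'])
  have hq := dotProduct_fst_div_card ((K' + diagonal fun p => s p / (T : ℝ))⁻¹ *ᵥ kstar) q
  simp only [Fintype.card_fin] at hsolve hq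
  let _ := hApd.isUnit.invertible
  let _ := hMpd.isUnit.invertible
  rw [mulVec_mulVec, mul_inv_of_invertible, one_mulVec] at hsolve
  rw [(isHermitian_iff_isSymm.mp hMpd.isHermitian).dotProduct_inv_mulVec,
    inv_mulVec_eq_vec hsolve.symm, hq,
    (isHermitian_iff_isSymm.mp hApd.isHermitian).dotProduct_inv_mulVec]

/-- Posterior-mean equivalence of Proposition 2 as a matrix identity:
the GP posterior predictive mean computed from all `P·T` samples equals the one
computed from the `P` per-model sample means with noise variances `s p / T`. -/
theorem gp_posterior_mean_equivalence
    (P T : ℕ) (hP : 0 < P) (hT : 0 < T)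
    (K' : Matrix (Fin P) (Fin P) ℝ) (hK' : K'.PosSemidef)
    (s : Fin P → ℝ) (hs : ∀ p, 0 < s p)
    (kstar : Fin P → ℝ)
    (K : Matrix (Fin P × Fin T) (Fin P × Fin T) ℝ)
    (hK : ∀ pt pt' : Fin P × Fin T, K pt pt' = K' pt.1 pt'.1)
    (D : Matrix (Fin P × Fin T) (Fin P × Fin T) ℝ)
    (hD : D = Matrix.diagonal fun pt : Fin P × Fin T => s pt.1)
    (ktilde : Fin P × Fin T → ℝ)
    (hktilde : ∀ pt : Fin P × Fin T, ktilde pt = kstar pt.1) :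
    (K + D).PosDef ∧
    (K' + Matrix.diagonal fun p : Fin P => s p / (T : ℝ)).PosDef ∧
    ∀ q : Fin P × Fin T → ℝ,
      ktilde ⬝ᵥ ((K + D)⁻¹).mulVec q =
        kstar ⬝ᵥ ((K' + Matrix.diagonal fun p : Fin P => s p / (T : ℝ))⁻¹).mulVec
          (fun p : Fin P => (1 / (T : ℝ)) * ∑ t : Fin T, q (p, t)) :=
  gp_posterior_mean_equivalence_general P T hT K' hK' s hs kstar K hK D hD ktilde hktilde
end

section
/- Let P, T be positive integers, let K′ be a symmetric positive semidefinite P×P real matrix, let s : Fin P → ℝ with s_p > 0, and let k_* ∈ ℝ^P. Define the (P·T)×(P·T) matrix K indexed by pairs (p,t) ∈ Fin P × Fin T by K_{(p,t),(p′,t′)} = K′_{p,p′}, the diagonal matrix D with diagonal entries D_{(p,t)} = s_p, and the vector k̃_* ∈ ℝ^{P·T} with entries (k̃_*)_{(p,t)} = (k_*)_p. Then k̃_*ᵀ (K + D)⁻¹ k̃_* = k_*ᵀ (K′ + diag(s_p/T))⁻¹ k_*; consequently the Gaussian-process posterior predictive variances computed from all P·T samples and from the P per-model means coincide: k(τ,τ)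 − k̃_*ᵀ(K+D)⁻¹k̃_* = k(τ,τ) − k_*ᵀ(K′+diag(s_p/T))⁻¹k_* for any scalar k(τ,τ). -/
open Matrix

/-!
Replicating each of the `P` models `T` times pulls the kernel back along `Prod.fst`, so a vector
constant on replicates is mapped by `K + D` to a vector constant on replicates, with the kernel
part picking up a factor `T` from the sum over replicates. Hence if `x` solves the `P`-dimensional
system `(K' + diag (s / T)) x = k_*`, then `x / T`, replicated, solves `(K + D) y = k̃_*`, and pairing
with `k̃_*` sums `T` equal copies of `k_* ⬝ x / T`.
-/

namespace Matrix

variable {ι τ R : Type*} [Fintype ι] [Fintype τ]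

theorem submatrix_fst_mulVec_comp_fst [NonUnitalNonAssocSemiring R] (A : Matrix ι ι R)
    (w : ι → R) :
    (A.submatrix Prod.fst Prod.fst : Matrix (ι × τ) (ι × τ) R) *ᵥ (w ∘ Prod.fst) =
      (Fintype.card τ • (A *ᵥ w)) ∘ Prod.fst := by
  funext ⟨i, t⟩
  simp [mulVec, dotProduct, Fintype.sum_prod_type, Finset.smul_sum]

theorem comp_fst_dotProduct_comp_fst [NonUnitalNonAssocSemiring R] (v w : ι → R) :
    (v ∘ Prod.fst : ι × τ → R) ⬝ᵥ (w ∘ Prod.fst) = Fintype.card τ • (v ⬝ᵥ w) := by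
  simp [dotProduct, Fintype.sum_prod_type, Finset.smul_sum]

variable [Field R] [DecidableEq ι] [DecidableEq τ]

theorem submatrix_fst_add_diagonal_mulVec_comp_fst (hτ : (Fintype.card τ : R) ≠ 0)
    (A : Matrix ι ι R) (s w : ι → R) :
    (A.submatrix Prod.fst Prod.fst + diagonal (s ∘ Prod.fst) : Matrix (ι × τ) (ι × τ) R) *ᵥ
        (((Fintype.card τ : R)⁻¹ • w) ∘ Prod.fst) =
      ((A + diagonal fun i => s i / Fintype.card τ) *ᵥ w) ∘ Prod.fst := by
  rw [add_mulVec, submatrix_fst_mulVec_comp_fst, mulVec_smul, nsmul_eq_mul, add_mulVec]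
  funext ⟨i, t⟩
  simp only [Pi.add_apply, Function.comp_apply, Pi.smul_apply, Pi.mul_apply, Pi.natCast_apply,
    smul_eq_mul, mulVec_diagonal, mul_inv_cancel_left₀ hτ, add_right_inj]
  ring

theorem comp_fst_dotProduct_inv_mulVec_comp_fst (hτ : (Fintype.card τ : R) ≠ 0)
    (A : Matrix ι ι R) (s k : ι → R)
    (hA : IsUnit (A + diagonal fun i => s i / Fintype.card τ))
    (hB : IsUnit (A.submatrix Prod.fst Prod.fst + diagonal (s ∘ Prod.fst) :
      Matrix (ι × τ) (ι × τ) R)) :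
    (k ∘ Prod.fst : ι × τ → R) ⬝ᵥ
        (A.submatrix Prod.fst Prod.fst + diagonal (s ∘ Prod.fst))⁻¹ *ᵥ (k ∘ Prod.fst) =
      k ⬝ᵥ (A + diagonal fun i => s i / Fintype.card τ)⁻¹ *ᵥ k := by
  let _ := hA.invertible
  let _ := hB.invertible
  set x := (A + diagonal fun i => s i / Fintype.card τ)⁻¹ *ᵥ k
  have hx : (A + diagonal fun i => s i / Fintype.card τ) *ᵥ x = k := by
    rw [mulVec_mulVec, mul_inv_of_invertible, one_mulVec]
  have hy : (A.submatrix Prod.fst Prod.fst + diagonal (s ∘ Prod.fst))⁻¹ *ᵥ (k ∘ Prod.fst) =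
      (((Fintype.card τ : R)⁻¹ • x) ∘ Prod.fst : ι × τ → R) :=
    inv_mulVec_eq_vec (by rw [submatrix_fst_add_diagonal_mulVec_comp_fst hτ, hx])
  rw [hy, comp_fst_dotProduct_comp_fst, dotProduct_smul, nsmul_eq_mul, smul_eq_mul,
    mul_inv_cancel_left₀ hτ]

end Matrix

theorem gp_posterior_variance_equivalence_general
    (P T : ℕ) (hT : 0 < T)
    (K' : Matrix (Fin P) (Fin P) ℝ) (hK' : K'.PosSemidef)
    (s : Fin P → ℝ) (hs : ∀ p, 0 < s p)
    (kstar : Fin P → ℝ)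
    (K : Matrix (Fin P × Fin T) (Fin P × Fin T) ℝ)
    (hK : ∀ pt pt' : Fin P × Fin T, K pt pt' = K' pt.1 pt'.1)
    (D : Matrix (Fin P × Fin T) (Fin P × Fin T) ℝ)
    (hD : D = Matrix.diagonal fun pt : Fin P × Fin T => s pt.1)
    (ktilde : Fin P × Fin T → ℝ)
    (hktilde : ∀ pt : Fin P × Fin T, ktilde pt = kstar pt.1) :
    (ktilde ⬝ᵥ ((K + D)⁻¹).mulVec ktilde =
      kstar ⬝ᵥ ((K' + Matrix.diagonal fun p : Fin P => s p / (T : ℝ))⁻¹).mulVec kstar) ∧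
    ∀ ktt : ℝ,
      ktt - ktilde ⬝ᵥ ((K + D)⁻¹).mulVec ktilde =
        ktt - kstar ⬝ᵥ ((K' + Matrix.diagonal fun p : Fin P => s p / (T : ℝ))⁻¹).mulVec kstar := by
  obtain rfl : K = K'.submatrix Prod.fst Prod.fst := Matrix.ext hK
  obtain rfl : ktilde = kstar ∘ Prod.fst := funext hktilde
  have hT' : (0 : ℝ) < T := Nat.cast_pos.mpr hT
  have hA : (K' + diagonal fun p => s p / (T : ℝ)).PosDef :=
    PosDef.posSemidef_add hK' (posDef_diagonal_iff.mpr fun p => div_pos (hs p) hT')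
  have hB : (K'.submatrix Prod.fst Prod.fst + D).PosDef :=
    hD ▸ PosDef.posSemidef_add (hK'.submatrix Prod.fst) (posDef_diagonal_iff.mpr fun pt => hs pt.1)
  have key := comp_fst_dotProduct_inv_mulVec_comp_fst (τ := Fin T)
    (by simpa using hT'.ne') K' s kstar (by simpa using hA.isUnit) (hD ▸ hB.isUnit)
  simp only [Fintype.card_fin] at key
  subst hD
  exact ⟨key, fun ktt => congrArg (ktt - ·) key⟩

/-- Posterior-variance equivalence of Proposition 2 as a matrix identity:
the quadratic form in the GP posterior predictive variance computed from all
`P·T` samples equals the one computed from the `P` per-model means. -/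
theorem gp_posterior_variance_equivalence
    (P T : ℕ) (hP : 0 < P) (hT : 0 < T)
    (K' : Matrix (Fin P) (Fin P) ℝ) (hK' : K'.PosSemidef)
    (s : Fin P → ℝ) (hs : ∀ p, 0 < s p)
    (kstar : Fin P → ℝ)
    (K : Matrix (Fin P × Fin T) (Fin P × Fin T) ℝ)
    (hK : ∀ pt pt' : Fin P × Fin T, K pt pt' = K' pt.1 pt'.1)
    (D : Matrix (Fin P × Fin T) (Fin P × Fin T) ℝ)
    (hD : D = Matrix.diagonal fun pt : Fin P × Fin T => s pt.1)
    (ktilde : Fin P × Fin T → ℝ)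
    (hktilde : ∀ pt : Fin P × Fin T, ktilde pt = kstar pt.1) :
    (ktilde ⬝ᵥ ((K + D)⁻¹).mulVec ktilde =
      kstar ⬝ᵥ ((K' + Matrix.diagonal fun p : Fin P => s p / (T : ℝ))⁻¹).mulVec kstar) ∧
    ∀ ktt : ℝ,
      ktt - ktilde ⬝ᵥ ((K + D)⁻¹).mulVec ktilde =
        ktt - kstar ⬝ᵥ ((K' + Matrix.diagonal fun p : Fin P => s p / (T : ℝ))⁻¹).mulVec kstar :=
  gp_posterior_variance_equivalence_general P T hT K' hK' s hs kstar K hK D hD ktilde hktilde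
end
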